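/- arXiv:1902.10429 — 3 statements merged into one kernel-verified Lean document; each statement's English description precedes it below -/
import Mathlib

section
/- Let G be a finite simple graph on vertices {x_1,...,x_n} with no isolated vertex, and let S be an independent set of G. Define the S-suspension G^S by adding a new vertex x_{n+1} and joining x_{n+1} to every vertex of G not in S. Then im(G^S) = im(G). -/
/-!
Induced matchings of `G` are exactly the induced matchings of `G^S` avoiding the new vertex
`none`. An induced matching of `G^S` through `none` is a single edge: since `S` is independent,
every other edge of `G` has an endpoint outside `S`, which is adjacent to `none`. As `G` has an
edge, the sets of sizes of induced matchings of `G` and of `G^S` coincide.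
-/

open MvPolynomial PowerSeries

/-- A matching of a simple graph: a set of pairwise disjoint edges. -/
def IsMatchingSet {V : Type*} (G : SimpleGraph V) (M : Finset (Sym2 V)) : Prop :=
  (↑M : Set (Sym2 V)) ⊆ G.edgeSet ∧
    ∀ e ∈ M, ∀ f ∈ M, e ≠ f → ∀ v, v ∈ e → v ∉ f

/-- An induced matching: a matching such that no edge of `G` meets two distinct
edges of the matching. -/
def IsInducedMatchingSet {V : Type*} (G : SimpleGraph V) (M : Finset (Sym2 V)) : Prop :=
  IsMatchingSet G M ∧
    ∀ e ∈ G.edgeSet, ∀ f ∈ M, ∀ g ∈ M, f ≠ g →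
      ¬((∃ v, v ∈ e ∧ v ∈ f) ∧ (∃ w, w ∈ e ∧ w ∈ g))

/-- The matching number `m(G)`. -/
noncomputable def matchNum {V : Type*} (G : SimpleGraph V) : ℕ :=
  sSup {k | ∃ M : Finset (Sym2 V), IsMatchingSet G M ∧ M.card = k}

/-- The induced matching number `im(G)`. -/
noncomputable def indMatchNum {V : Type*} (G : SimpleGraph V) : ℕ :=
  sSup {k | ∃ M : Finset (Sym2 V), IsInducedMatchingSet G M ∧ M.card = k}

/-- The `S`-suspension `G^S`: add a new vertex (`none`) joined to every vertex not in `S`. -/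
def sSusp {V : Type*} (G : SimpleGraph V) (S : Set V) : SimpleGraph (Option V) :=
  SimpleGraph.fromRel (fun a b =>
    (∃ x y, a = some x ∧ b = some y ∧ G.Adj x y) ∨
    (a = none ∧ ∃ y, b = some y ∧ y ∉ S))

/-- The `{x_i,x_j}, S`-suspension: add a new vertex (`none`) joined to every vertex
outside `S ∪ {i, j}`. -/
def eSusp {V : Type*} (G : SimpleGraph V) (i j : V) (S : Set V) : SimpleGraph (Option V) :=
  SimpleGraph.fromRel (fun a b =>
    (∃ x y, a = some x ∧ b = some y ∧ G.Adj x y) ∨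
    (a = none ∧ ∃ y, b = some y ∧ y ∉ S ∧ y ≠ i ∧ y ≠ j))

/-- The edge ideal of a graph. -/
noncomputable def edgeIdeal (K : Type*) [Field K] {σ : Type*} (G : SimpleGraph σ) :
    Ideal (MvPolynomial σ K) :=
  Ideal.span {p | ∃ i j, G.Adj i j ∧ p = X i * X j}

/-- The Hilbert function of `R/I` (standard grading). -/
noncomputable def hilbFun (K : Type*) [Field K] {σ : Type*}
    (I : Ideal (MvPolynomial σ K)) (n : ℕ) : ℕ :=
  Module.finrank K ((homogeneousSubmodule σ K n).map
    (Ideal.Quotient.mkₐ K I).toLinearMap)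

/-- The Hilbert series of `R/I`, as a power series over `ℚ`. -/
noncomputable def hilbSeries (K : Type*) [Field K] {σ : Type*}
    (I : Ideal (MvPolynomial σ K)) : PowerSeries ℚ :=
  PowerSeries.mk fun n => (hilbFun K I n : ℚ)

/-- `HilbEq K I d h` says that the Hilbert series of `R/I` equals `h(λ)/(1-λ)^d`
with `h(1) ≠ 0`, i.e. `h` is the `h`-polynomial and `d = dim R/I`. -/
def HilbEq (K : Type*) [Field K] {σ : Type*} (I : Ideal (MvPolynomial σ K))
    (d : ℕ) (h : Polynomial ℤ) : Prop :=
  hilbSeries K I * (1 - PowerSeries.X) ^ d =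
    ((h.map (Int.castRingHom ℚ) : Polynomial ℚ) : PowerSeries ℚ) ∧ h.eval 1 ≠ 0

/-- `regBound K I r` : there is a finite graded free resolution of `R/I` all of whose
generator degrees in homological degree `i` are at most `i + r`.  The minimal free
resolution realizes `r = reg(R/I)`, and the generator degrees of any graded free
resolution contain those of the minimal one, hence
`reg(R/I) = sInf {r | regBound K I r}`. -/
noncomputable def regBound (K : Type*) [Field K] {σ : Type*}
    (I : Ideal (MvPolynomial σ K)) (r : ℕ) : Prop :=
  ∃ (L : ℕ) (k : ℕ → ℕ) (d : (i : ℕ) → Fin (k i) → ℕ)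
    (φ : (i : ℕ) → ((Fin (k (i + 1)) →₀ MvPolynomial σ K) →ₗ[MvPolynomial σ K]
      (Fin (k i) →₀ MvPolynomial σ K)))
    (ε : (Fin (k 0) →₀ MvPolynomial σ K) →ₗ[MvPolynomial σ K] (MvPolynomial σ K ⧸ I)),
    (∀ i, L ≤ i → k i = 0) ∧
    (∀ (i : ℕ) (b : Fin (k (i + 1))) (a : Fin (k i)),
      (φ i (Finsupp.single b 1)) a ∈ homogeneousSubmodule σ K (d (i + 1) b - d i a) ∧
      (d (i + 1) b < d i a → (φ i (Finsupp.single b 1)) a = 0)) ∧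
    (∀ a : Fin (k 0), ε (Finsupp.single a 1) ∈
      (homogeneousSubmodule σ K (d 0 a)).map (Ideal.Quotient.mkₐ K I).toLinearMap) ∧
    Function.Surjective ε ∧
    LinearMap.range (φ 0) = LinearMap.ker ε ∧
    (∀ i : ℕ, LinearMap.range (φ (i + 1)) = LinearMap.ker (φ i)) ∧
    (∀ (i : ℕ) (a : Fin (k i)), d i a ≤ i + r)

/-- The Castelnuovo–Mumford regularity of `R/I`. -/
noncomputable def reg (K : Type*) [Field K] {σ : Type*}
    (I : Ideal (MvPolynomial σ K)) : ℕ :=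
  sInf {r | regBound K I r}


open SimpleGraph

section InducedMatching

variable {V W : Type*} {G : SimpleGraph V} {H : SimpleGraph W} {M : Finset (Sym2 V)}

/-- An edge meeting two disjoint matching edges joins a vertex of one to a vertex of the
other, so inducedness is a condition on adjacency between matching edges. -/
lemma isInducedMatchingSet_iff_forall_not_adj :
    IsInducedMatchingSet G M ↔ IsMatchingSet G M ∧
      ∀ f ∈ M, ∀ g ∈ M, f ≠ g → ∀ v ∈ f, ∀ w ∈ g, ¬ G.Adj v w := by
  refine and_congr_right fun hM => ⟨fun hind f hf g hg hfg v hv w hw hvw => ?_,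
    fun hadj e he f hf g hg hfg ⟨⟨v, hve, hvf⟩, ⟨w, hwe, hwg⟩⟩ => ?_⟩
  · exact hind s(v, w) hvw f hf g hg hfg
      ⟨⟨v, Sym2.mem_mk_left v w, hv⟩, ⟨w, Sym2.mem_mk_right v w, hw⟩⟩
  · have hvw : v ≠ w := fun h => hM.2 f hf g hg hfg v hvf (h ▸ hwg)
    rw [(Sym2.mem_and_mem_iff hvw).mp ⟨hve, hwe⟩] at he
    exact hadj f hf g hg hfg v hvf w hwg he

lemma isInducedMatchingSet_singleton {x y : V} (h : G.Adj x y) :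
    IsInducedMatchingSet G {s(x, y)} := by
  refine isInducedMatchingSet_iff_forall_not_adj.mpr ⟨⟨?_, ?_⟩, ?_⟩ <;> simp [h]

lemma SimpleGraph.Embedding.isInducedMatchingSet_map_iff (φ : G ↪g H) :
    IsInducedMatchingSet H (M.map φ.toEmbedding.sym2Map) ↔ IsInducedMatchingSet G M := by
  simp only [isInducedMatchingSet_iff_forall_not_adj, IsMatchingSet, Finset.coe_map,
    Set.image_subset_iff, Finset.forall_mem_map, Function.Embedding.sym2Map_apply,
    Sym2.mem_map, forall_exists_index, and_imp, forall_apply_eq_imp_iff₂,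
    RelEmbedding.coe_toEmbedding, φ.preimage_edgeSet, φ.map_adj_iff, φ.injective.eq_iff,
    (Sym2.map.injective φ.injective).ne_iff, exists_eq_right]

end InducedMatching

section OptionSym2

variable {V : Type*}

lemma exists_map_some_eq_of_none_notMem {e : Sym2 (Option V)} (h : none ∉ e) :
    ∃ e₀ : Sym2 V, Sym2.map some e₀ = e := by
  induction e using Sym2.ind with
  | h a b =>
    obtain ⟨x, rfl⟩ := (Option.ne_none_iff_exists' (o := a)).mp
      (by rintro rfl; exact h (Sym2.mem_mk_left _ b))
    obtain ⟨y, rfl⟩ := (Option.ne_none_iff_exists' (o := b)).mp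
      (by rintro rfl; exact h (Sym2.mem_mk_right _ _))
    exact ⟨s(x, y), rfl⟩

lemma exists_eq_map_sym2Map_some {M : Finset (Sym2 (Option V))} (h : ∀ e ∈ M, none ∉ e) :
    ∃ M₀ : Finset (Sym2 V), M = M₀.map Function.Embedding.some.sym2Map := by
  classical
  refine ⟨M.preimage _ (Sym2.map.injective (Option.some_injective V)).injOn,
    Finset.ext fun e => ?_⟩
  simp only [Finset.mem_map, Finset.mem_preimage, Function.Embedding.sym2Map_apply]
  constructor
  · intro he
    obtain ⟨e₀, rfl⟩ := exists_map_some_eq_of_none_notMem (h e he)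
    exact ⟨e₀, he, rfl⟩
  · rintro ⟨e₀, he₀, rfl⟩
    exact he₀

end OptionSym2

section Suspension

variable {V : Type*} (G : SimpleGraph V) (S : Set V)

@[simp] lemma sSusp_adj_some_some {x y : V} :
    (sSusp G S).Adj (some x) (some y) ↔ G.Adj x y := by
  simp only [sSusp, fromRel_adj, ne_eq, Option.some.injEq, reduceCtorEq, false_and, or_false]
  exact ⟨fun ⟨_, h⟩ => h.elim (fun ⟨_, _, hx, hy, h⟩ => by cases hx; cases hy; exact h)
    fun ⟨_, _, hy, hx, h⟩ => by cases hx; cases hy; exact h.symm,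
    fun h => ⟨G.ne_of_adj h, Or.inl ⟨x, y, rfl, rfl, h⟩⟩⟩

@[simp] lemma sSusp_adj_none_some {y : V} : (sSusp G S).Adj none (some y) ↔ y ∉ S := by
  simp [sSusp]

def sSuspEmbedding : G ↪g sSusp G S :=
  ⟨Function.Embedding.some, sSusp_adj_some_some G S⟩

variable {G S}

/-- Independence of `S` makes the new vertex adjacent to every edge of `G`. -/
lemma IsInducedMatchingSet.eq_singleton_of_none_mem (hS : ∀ x ∈ S, ∀ y ∈ S, ¬ G.Adj x y)
    {M : Finset (Sym2 (Option V))} (hM : IsInducedMatchingSet (sSusp G S) M)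
    {e : Sym2 (Option V)} (he : e ∈ M) (hne : none ∈ e) : M = {e} := by
  obtain ⟨hmatch, hind⟩ := isInducedMatchingSet_iff_forall_not_adj.mp hM
  refine Finset.eq_singleton_iff_unique_mem.mpr ⟨he, fun f hf => by_contra fun hfe => ?_⟩
  obtain ⟨f₀, rfl⟩ :=
    exists_map_some_eq_of_none_notMem (hmatch.2 e he _ hf (Ne.symm hfe) none hne)
  induction f₀ using Sym2.ind with
  | h a b =>
    have hab : G.Adj a b := by simpa using hmatch.1 hf
    have hnotS : a ∉ S ∨ b ∉ S := by
      by_contra! h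
      exact hS a h.1 b h.2 hab
    rcases hnotS with ha | hb
    · exact hind e he _ hf (Ne.symm hfe) none hne (some a) (by simp) (by simpa using ha)
    · exact hind e he _ hf (Ne.symm hfe) none hne (some b) (by simp) (by simpa using hb)

end Suspension

theorem stmt_2_general {V : Type*} (G : SimpleGraph V)
    (hiso : ∀ v : V, ∃ w, G.Adj v w) (S : Set V)
    (hS : ∀ x ∈ S, ∀ y ∈ S, ¬ G.Adj x y) :
    indMatchNum (sSusp G S) = indMatchNum G := by
  unfold indMatchNum
  congr 1
  ext k
  constructor
  · rintro ⟨M, hM, rfl⟩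
    by_cases hnone : ∃ e ∈ M, none ∈ e
    · obtain ⟨e, he, hne⟩ := hnone
      have hdiag := (sSusp G S).not_isDiag_of_mem_edgeSet (hM.1.1 he)
      obtain ⟨y, -⟩ := Option.ne_none_iff_exists'.mp (Sym2.other_ne hdiag hne)
      obtain ⟨w, hyw⟩ := hiso y
      refine ⟨{s(y, w)}, isInducedMatchingSet_singleton hyw, ?_⟩
      rw [hM.eq_singleton_of_none_mem hS he hne, Finset.card_singleton, Finset.card_singleton]
    · push Not at hnone
      obtain ⟨M₀, rfl⟩ := exists_eq_map_sym2Map_some hnone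
      exact ⟨M₀, (sSuspEmbedding G S).isInducedMatchingSet_map_iff.mp hM,
        (Finset.card_map _).symm⟩
  · rintro ⟨M, hM, rfl⟩
    exact ⟨_, (sSuspEmbedding G S).isInducedMatchingSet_map_iff.mpr hM, Finset.card_map _⟩

/-- the `S`-suspension of a graph with no isolated vertex, over an
independent set `S`, has the same induced matching number. -/
theorem stmt_2 {V : Type*} [Fintype V] (G : SimpleGraph V)
    (hiso : ∀ v : V, ∃ w, G.Adj v w) (S : Set V)
    (hS : ∀ x ∈ S, ∀ y ∈ S, ¬ G.Adj x y) :
    indMatchNum (sSusp G S) = indMatchNum G :=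
  stmt_2_general G hiso S hS
end

section
/- Let G be a finite simple graph on {x_1,...,x_n}, {x_i,x_j} an edge of G, and S an independent set of G with no vertex of S adjacent to x_i or x_j. Let G' = G^{{x_i,x_j},S} be the graph obtained by adding a new vertex x_{n+1} adjacent to all x_k ∉ S ∪ {x_i, x_j}. Then in R' = K[x_1,...,x_{n+1}], one has I(G') : (x_{n+1}) = (x_i x_j) + (x_k : x_k ∉ S ∪ {x_i} ∪ {x_j}) and I(G') + (x_{n+1}) = I(G) + (x_{n+1}). -/
open MvPolynomial PowerSeries

section Aux

variable {K : Type*} [Field K] {n : ℕ}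

private lemma aux_coeff_shift (Q₀ : Ideal (MvPolynomial (Fin n) K))
    {g : Polynomial (MvPolynomial (Fin n) K)}
    (hf : g * Polynomial.X ∈ Q₀.map Polynomial.C) :
    g ∈ Q₀.map Polynomial.C := by
  rw [Ideal.mem_map_C_iff] at hf ⊢
  intro m
  have := hf (m + 1)
  rwa [Polynomial.coeff_mul_X] at this

end Aux

theorem stmt_7' (K : Type*) [Field K] {n : ℕ} (G : SimpleGraph (Fin n))
    (i j : Fin n) (hij : G.Adj i j) (S : Set (Fin n))
    (hS : ∀ x ∈ S, ∀ y ∈ S, ¬ G.Adj x y)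
    (hSij : ∀ x ∈ S, ¬ G.Adj x i ∧ ¬ G.Adj x j) :
    Submodule.colon (edgeIdeal K (eSusp G i j S))
        (Ideal.span {(X none : MvPolynomial (Option (Fin n)) K)}) =
      Ideal.span ({X (some i) * X (some j)} ∪
        {p : MvPolynomial (Option (Fin n)) K |
          ∃ k, k ∉ S ∧ k ≠ i ∧ k ≠ j ∧ p = X (some k)}) ∧
    edgeIdeal K (eSusp G i j S) +
        Ideal.span {(X none : MvPolynomial (Option (Fin n)) K)} =
      edgeIdeal K (G.map Function.Embedding.some) +
        Ideal.span {(X none : MvPolynomial (Option (Fin n)) K)} := by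
  classical
  set gensQ : Set (MvPolynomial (Option (Fin n)) K) :=
    ({X (some i) * X (some j)} ∪
      {p : MvPolynomial (Option (Fin n)) K |
        ∃ k, k ∉ S ∧ k ≠ i ∧ k ≠ j ∧ p = X (some k)}) with hgensQ
  set gens₀ : Set (MvPolynomial (Fin n) K) :=
    ({X i * X j} ∪ {p : MvPolynomial (Fin n) K |
        ∃ k, k ∉ S ∧ k ≠ i ∧ k ≠ j ∧ p = X k}) with hgens₀
  -- every G-edge monomial lies in the span of gensQ
  have edge_mem : ∀ x y : Fin n, G.Adj x y →
      X (some x) * X (some y) ∈ Ideal.span gensQ := by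
    intro x y hxy
    by_cases hy : y ∉ S ∧ y ≠ i ∧ y ≠ j
    · exact Ideal.mul_mem_left _ _
        (Ideal.subset_span (Set.mem_union_right _ ⟨y, hy.1, hy.2.1, hy.2.2, rfl⟩))
    by_cases hx : x ∉ S ∧ x ≠ i ∧ x ≠ j
    · rw [mul_comm]
      exact Ideal.mul_mem_left _ _
        (Ideal.subset_span (Set.mem_union_right _ ⟨x, hx.1, hx.2.1, hx.2.2, rfl⟩))
    have hx' : x ∈ S ∨ x = i ∨ x = j := by
      by_contra h; push_neg at h; exact hx ⟨h.1, h.2.1, h.2.2⟩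
    have hy' : y ∈ S ∨ y = i ∨ y = j := by
      by_contra h; push_neg at h; exact hy ⟨h.1, h.2.1, h.2.2⟩
    rcases hx' with hxS | rfl | rfl
    · rcases hy' with hyS | rfl | rfl
      · exact absurd hxy (hS x hxS y hyS)
      · exact absurd hxy (hSij x hxS).1
      · exact absurd hxy (hSij x hxS).2
    · rcases hy' with hyS | rfl | rfl
      · exact absurd hxy.symm (hSij y hyS).1
      · exact absurd hxy (G.irrefl)
      · exact Ideal.subset_span (Set.mem_union_left _ rfl)
    · rcases hy' with hyS | rfl | rfl
      · exact absurd hxy.symm (hSij y hyS).2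
      · rw [mul_comm]; exact Ideal.subset_span (Set.mem_union_left _ rfl)
      · exact absurd hxy (G.irrefl)
  have hJle : edgeIdeal K (eSusp G i j S) ≤ Ideal.span gensQ := by
    rw [edgeIdeal]
    refine Ideal.span_le.2 ?_
    rintro p ⟨a, b, hab, rfl⟩
    simp only [eSusp, SimpleGraph.fromRel_adj] at hab
    obtain ⟨hne, h | h⟩ := hab
    · rcases h with ⟨x, y, rfl, rfl, hxy⟩ | ⟨rfl, y, rfl, hy1, hy2, hy3⟩
      · exact edge_mem x y hxy
      · exact Ideal.mul_mem_left _ _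
          (Ideal.subset_span (Set.mem_union_right _ ⟨y, hy1, hy2, hy3, rfl⟩))
    · rcases h with ⟨x, y, rfl, rfl, hxy⟩ | ⟨rfl, y, rfl, hy1, hy2, hy3⟩
      · exact edge_mem y x hxy.symm
      · rw [mul_comm]
        exact Ideal.mul_mem_left _ _
          (Ideal.subset_span (Set.mem_union_right _ ⟨y, hy1, hy2, hy3, rfl⟩))
  set e : MvPolynomial (Option (Fin n)) K ≃+* Polynomial (MvPolynomial (Fin n) K) :=
    (optionEquivLeft K (Fin n)).toRingEquiv with he
  have hmapQ : Ideal.map e (Ideal.span gensQ) = Ideal.map Polynomial.C (Ideal.span gens₀) := by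
    rw [Ideal.map_span, Ideal.map_span]
    congr 1
    ext q
    constructor
    · rintro ⟨p, hp | ⟨k, h1, h2, h3, rfl⟩, rfl⟩
      · rw [Set.mem_singleton_iff] at hp; subst hp
        refine ⟨X i * X j, Set.mem_union_left _ rfl, ?_⟩
        simp [he, optionEquivLeft_X_some]
      · exact ⟨X k, Set.mem_union_right _ ⟨k, h1, h2, h3, rfl⟩,
          by simp [he, optionEquivLeft_X_some]⟩
    · rintro ⟨p, hp | ⟨k, h1, h2, h3, rfl⟩, rfl⟩
      · rw [Set.mem_singleton_iff] at hp; subst hp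
        refine ⟨X (some i) * X (some j), Set.mem_union_left _ rfl, ?_⟩
        simp [he, optionEquivLeft_X_some]
      · exact ⟨X (some k), Set.mem_union_right _ ⟨k, h1, h2, h3, rfl⟩,
          by simp [he, optionEquivLeft_X_some]⟩
  constructor
  · apply le_antisymm
    · intro f hf
      rw [Ideal.mem_colon_span_singleton] at hf
      have hfQ : f * X none ∈ Ideal.span gensQ := hJle hf
      have h1 : e (f * X none) ∈ Ideal.map e (Ideal.span gensQ) :=
        Ideal.apply_mem_of_equiv_iff.2 hfQ
      rw [hmapQ, map_mul] at h1
      have h2 : e f * Polynomial.X ∈ Ideal.map Polynomial.C (Ideal.span gens₀) := by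
        have : e (X (none : Option (Fin n))) = Polynomial.X := by
          simp [he, optionEquivLeft_X_none]
        rwa [this] at h1
      have h3 := aux_coeff_shift _ h2
      rw [← hmapQ] at h3
      exact Ideal.apply_mem_of_equiv_iff.1 h3
    · refine Ideal.span_le.2 ?_
      rintro p (hp | ⟨k, h1, h2, h3, rfl⟩)
      · rw [Set.mem_singleton_iff] at hp; subst hp
        rw [SetLike.mem_coe, Ideal.mem_colon_span_singleton]
        refine Ideal.mul_mem_right _ _ (Ideal.subset_span ?_)
        refine ⟨some i, some j, ?_, rfl⟩
        simp only [eSusp, SimpleGraph.fromRel_adj]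
        exact ⟨by simpa using hij.ne, Or.inl (Or.inl ⟨i, j, rfl, rfl, hij⟩)⟩
      · rw [SetLike.mem_coe, Ideal.mem_colon_span_singleton, mul_comm]
        refine Ideal.subset_span ?_
        refine ⟨none, some k, ?_, rfl⟩
        simp only [eSusp, SimpleGraph.fromRel_adj]
        exact ⟨by simp, Or.inl (Or.inr ⟨trivial, k, rfl, h1, h2, h3⟩)⟩
  · apply le_antisymm
    · refine sup_le ?_ le_sup_right
      rw [edgeIdeal]
      refine Ideal.span_le.2 ?_
      rintro p ⟨a, b, hab, rfl⟩
      simp only [eSusp, SimpleGraph.fromRel_adj] at hab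
      obtain ⟨hne, h | h⟩ := hab
      · rcases h with ⟨x, y, rfl, rfl, hxy⟩ | ⟨rfl, y, rfl, hy1, hy2, hy3⟩
        · refine Ideal.mem_sup_left (Ideal.subset_span ⟨some x, some y, ?_, rfl⟩)
          simp only [SimpleGraph.map_adj]
          exact ⟨x, y, hxy, rfl, rfl⟩
        · exact Ideal.mem_sup_right
            (Ideal.mul_mem_right _ _ (Ideal.subset_span rfl))
      · rcases h with ⟨x, y, rfl, rfl, hxy⟩ | ⟨rfl, y, rfl, hy1, hy2, hy3⟩
        · refine Ideal.mem_sup_left (Ideal.subset_span ⟨some y, some x, ?_, rfl⟩)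
          simp only [SimpleGraph.map_adj]
          exact ⟨y, x, hxy.symm, rfl, rfl⟩
        · exact Ideal.mem_sup_right
            (Ideal.mul_mem_left _ _ (Ideal.subset_span rfl))
    · refine sup_le ?_ le_sup_right
      rw [edgeIdeal]
      refine Ideal.span_le.2 ?_
      rintro p ⟨a, b, hab, rfl⟩
      simp only [SimpleGraph.map_adj] at hab
      obtain ⟨x, y, hxy, rfl, rfl⟩ := hab
      refine Ideal.mem_sup_left (Ideal.subset_span ⟨_, _, ?_, rfl⟩)
      simp only [eSusp, SimpleGraph.fromRel_adj]
      refine ⟨?_, Or.inl (Or.inl ⟨x, y, rfl, rfl, hxy⟩)⟩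
      simpa using hxy.ne

/-- colon and sum of the edge ideal of the `{x_i,x_j}, S`-suspension by the
new variable (`X none` is the new variable `x_{n+1}`). -/
theorem stmt_7 (K : Type*) [Field K] {n : ℕ} (G : SimpleGraph (Fin n))
    (i j : Fin n) (hij : G.Adj i j) (S : Set (Fin n))
    (hS : ∀ x ∈ S, ∀ y ∈ S, ¬ G.Adj x y)
    (hSij : ∀ x ∈ S, ¬ G.Adj x i ∧ ¬ G.Adj x j) :
    Submodule.colon (edgeIdeal K (eSusp G i j S))
        (Ideal.span {(X none : MvPolynomial (Option (Fin n)) K)}) =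
      Ideal.span ({X (some i) * X (some j)} ∪
        {p : MvPolynomial (Option (Fin n)) K |
          ∃ k, k ∉ S ∧ k ≠ i ∧ k ≠ j ∧ p = X (some k)}) ∧
    edgeIdeal K (eSusp G i j S) +
        Ideal.span {(X none : MvPolynomial (Option (Fin n)) K)} =
      edgeIdeal K (G.map Function.Embedding.some) +
        Ideal.span {(X none : MvPolynomial (Option (Fin n)) K)} := by
  exact stmt_7' K G i j hij S hS hSij
end

section
/- Let G be a finite simple graph with no isolated vertex, {x_i,x_j} an edge, and S an independent set with no vertex of S adjacent to x_i or x_j. Then the Hilbert series of R'/I(G^{{x_i,x_j},S}) equals H_{R/I(G)}(λ) + λ(1+λ)/(1-λ)^{|S|+2}. -/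
open MvPolynomial PowerSeries

namespace Stmt9Aux

variable {σ : Type*}

/-- The support of `d` is an independent set of `H`. -/
def Ind (H : SimpleGraph σ) (d : σ →₀ ℕ) : Prop :=
  ∀ a b, H.Adj a b → ¬(d a ≠ 0 ∧ d b ≠ 0)

/-- Standard monomials of degree `m` for the edge ideal of `H`. -/
def Std (H : SimpleGraph σ) (m : ℕ) : Set (σ →₀ ℕ) :=
  {d | Finsupp.degree d = m ∧ Ind H d}

lemma Std_finite [Finite σ] (H : SimpleGraph σ) (m : ℕ) : (Std H m).Finite :=
  (Finsupp.finite_of_degree_le m).subset fun _ hd => le_of_eq hd.1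

lemma degree_add (d e : σ →₀ ℕ) :
    Finsupp.degree (d + e) = Finsupp.degree d + Finsupp.degree e := by
  simp only [Finsupp.degree_eq_weight_one, map_add]

lemma degree_single (x : σ) (k : ℕ) : Finsupp.degree (Finsupp.single x k) = k := by
  rcases eq_or_ne k 0 with rfl | hk
  · simp [Finsupp.degree]
  · rw [Finsupp.degree_apply, Finsupp.support_single_ne_zero _ hk, Finset.sum_singleton,
      Finsupp.single_eq_same]

lemma degree_embDomain {τ : Type*} (f : τ ↪ σ) (e : τ →₀ ℕ) :
    Finsupp.degree (Finsupp.embDomain f e) = Finsupp.degree e := by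
  rw [Finsupp.degree_apply, Finsupp.degree_apply, Finsupp.support_embDomain, Finset.sum_map]
  exact Finset.sum_congr rfl fun a _ => Finsupp.embDomain_apply_self f e a

variable (K : Type*) [Field K]

open MvPolynomial

lemma X_mul_X (a b : σ) : (MvPolynomial.X a * MvPolynomial.X b : MvPolynomial σ K)
    = MvPolynomial.monomial (Finsupp.single a 1 + Finsupp.single b 1) 1 := by
  rw [← pow_one (MvPolynomial.X a), ← pow_one (MvPolynomial.X b), X_pow_eq_monomial,
    X_pow_eq_monomial, monomial_mul, one_mul]

lemma edgeIdeal_eq_span (H : SimpleGraph σ) :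
    edgeIdeal K H = Ideal.span ((fun s => MvPolynomial.monomial s (1 : K)) ''
      {e : σ →₀ ℕ | ∃ a b, H.Adj a b ∧ e = Finsupp.single a 1 + Finsupp.single b 1}) := by
  unfold edgeIdeal
  congr 1
  ext p
  constructor
  · rintro ⟨a, b, hab, rfl⟩
    exact ⟨Finsupp.single a 1 + Finsupp.single b 1, ⟨a, b, hab, rfl⟩, (X_mul_X K a b).symm⟩
  · rintro ⟨e, ⟨a, b, hab, rfl⟩, rfl⟩
    exact ⟨a, b, hab, (X_mul_X K a b).symm⟩

lemma mem_edgeIdeal (H : SimpleGraph σ) (p : MvPolynomial σ K) :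
    p ∈ edgeIdeal K H ↔ ∀ d ∈ p.support, ∃ a b, H.Adj a b ∧
      Finsupp.single a 1 + Finsupp.single b 1 ≤ d := by
  rw [edgeIdeal_eq_span, mem_ideal_span_monomial_image]
  constructor
  · intro h d hd
    obtain ⟨e, ⟨a, b, hab, rfl⟩, hle⟩ := h d hd
    exact ⟨a, b, hab, hle⟩
  · intro h d hd
    obtain ⟨a, b, hab, hle⟩ := h d hd
    exact ⟨_, ⟨a, b, hab, rfl⟩, hle⟩

lemma edge_le_support {a b : σ} {d : σ →₀ ℕ}
    (h : Finsupp.single a 1 + Finsupp.single b 1 ≤ d) : d a ≠ 0 ∧ d b ≠ 0 := by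
  rw [Finsupp.le_def] at h
  have ha := h a
  have hb := h b
  rw [Finsupp.add_apply, Finsupp.single_eq_same] at ha
  rw [Finsupp.add_apply, Finsupp.single_eq_same] at hb
  omega

lemma le_of_support {a b : σ} (hab : a ≠ b) {d : σ →₀ ℕ} (ha : d a ≠ 0) (hb : d b ≠ 0) :
    Finsupp.single a 1 + Finsupp.single b 1 ≤ d := by
  rw [Finsupp.le_def]
  intro s
  rw [Finsupp.add_apply]
  rcases eq_or_ne s a with rfl | hsa
  · rw [Finsupp.single_eq_same, Finsupp.single_eq_of_ne' (Ne.symm hab)]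
    omega
  · rw [Finsupp.single_eq_of_ne' (Ne.symm hsa)]
    rcases eq_or_ne s b with rfl | hsb
    · rw [Finsupp.single_eq_same]; omega
    · rw [Finsupp.single_eq_of_ne' (Ne.symm hsb)]; omega

lemma monomial_mem_edgeIdeal (H : SimpleGraph σ) {d : σ →₀ ℕ} (h : ¬ Ind H d) (c : K) :
    monomial d c ∈ edgeIdeal K H := by
  classical
  rw [mem_edgeIdeal]
  intro e he
  have hed : e = d := by
    rcases eq_or_ne c 0 with rfl | hc
    · simp at he
    · rwa [MvPolynomial.support_monomial, if_neg hc, Finset.mem_singleton] at he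
  subst hed
  simp only [Ind, not_forall] at h
  obtain ⟨a, b, hab, hcon⟩ := h
  rw [not_not] at hcon
  exact ⟨a, b, hab, le_of_support hab.ne hcon.1 hcon.2⟩

lemma hilbFun_eq [Finite σ] (H : SimpleGraph σ) (m : ℕ) :
    hilbFun K (edgeIdeal K H) m = (Std H m).ncard := by
  classical
  have hfin : (Std H m).Finite := Std_finite H m
  haveI := hfin.fintype
  set I := edgeIdeal K H with hI
  set fam : Std H m → MvPolynomial σ K ⧸ I :=
    fun d => Ideal.Quotient.mkₐ K I (monomial (d : σ →₀ ℕ) 1) with hfam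
  have hli : LinearIndependent K fam := by
    rw [linearIndependent_iff']
    intro s g hsum t ht
    by_contra hgt
    set p : MvPolynomial σ K := ∑ d ∈ s, monomial (d : σ →₀ ℕ) (g d) with hp
    have hmem : p ∈ I := by
      rw [← Ideal.Quotient.eq_zero_iff_mem, ← Ideal.Quotient.mkₐ_eq_mk K I]
      have : Ideal.Quotient.mkₐ K I p = ∑ d ∈ s, g d • fam d := by
        rw [hp, map_sum]
        refine Finset.sum_congr rfl fun d _ => ?_
        rw [hfam, ← map_smul, smul_monomial, smul_eq_mul, mul_one]
      rw [this, hsum]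
    have hcoeff : p.coeff (t : σ →₀ ℕ) = g t := by
      rw [hp, ← hp]
      rw [hp]
      rw [MvPolynomial.coeff_sum]
      rw [Finset.sum_eq_single_of_mem t ht]
      · rw [MvPolynomial.coeff_monomial, if_pos rfl]
      · intro d _ hdt
        rw [MvPolynomial.coeff_monomial, if_neg (fun hc => hdt (Subtype.coe_injective hc))]
    have hts : (t : σ →₀ ℕ) ∈ p.support := by
      rw [mem_support_iff, hcoeff]; exact hgt
    obtain ⟨a, b, hab, hle⟩ := (mem_edgeIdeal K H p).mp hmem _ hts
    exact t.2.2 a b hab (edge_le_support hle)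
  have hspan : (homogeneousSubmodule σ K m).map (Ideal.Quotient.mkₐ K I).toLinearMap
      = Submodule.span K (Set.range fam) := by
    apply le_antisymm
    · rintro x ⟨p, hp, rfl⟩
      replace hp : MvPolynomial.IsHomogeneous p m := hp
      rw [AlgHom.toLinearMap_apply, ← support_sum_monomial_coeff p, map_sum]
      apply Submodule.sum_mem
      intro d hd
      have hdeg : Finsupp.degree d = m := by
        by_contra hne
        exact mem_support_iff.mp hd (hp.coeff_eq_zero hne)
      by_cases hInd : Ind H d
      · have : Ideal.Quotient.mkₐ K I (monomial d (p.coeff d))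
            = p.coeff d • fam ⟨d, hdeg, hInd⟩ := by
          rw [hfam, ← map_smul, smul_monomial, smul_eq_mul, mul_one]
        rw [this]
        exact Submodule.smul_mem _ _ (Submodule.subset_span ⟨_, rfl⟩)
      · have : Ideal.Quotient.mkₐ K I (monomial d (p.coeff d)) = 0 := by
          rw [Ideal.Quotient.mkₐ_eq_mk, Ideal.Quotient.eq_zero_iff_mem, hI]
          exact monomial_mem_edgeIdeal K H hInd _
        rw [this]
        exact Submodule.zero_mem _
    · rw [Submodule.span_le]
      rintro x ⟨d, rfl⟩
      exact ⟨monomial (d : σ →₀ ℕ) 1, isHomogeneous_monomial _ d.2.1, rfl⟩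
  unfold hilbFun
  rw [hspan, finrank_span_eq_card hli, ← Nat.card_coe_set_eq, Nat.card_eq_fintype_card]

lemma hilbSeries_eq [Finite σ] (H : SimpleGraph σ) :
    hilbSeries K (edgeIdeal K H) = PowerSeries.mk fun m => ((Std H m).ncard : ℚ) := by
  unfold hilbSeries
  ext m
  rw [PowerSeries.coeff_mk, PowerSeries.coeff_mk, hilbFun_eq]

/-! ### Generic counting lemmas -/

lemma ncard_split {α : Type*} (A : Set α) (hA : A.Finite) (p : α → Prop) :
    A.ncard = {x ∈ A | p x}.ncard + {x ∈ A | ¬ p x}.ncard := by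
  have hu : A = {x ∈ A | p x} ∪ {x ∈ A | ¬ p x} := by
    ext x
    by_cases h : p x <;> simp [h]
  have hd : Disjoint {x ∈ A | p x} {x ∈ A | ¬ p x} := by
    rw [Set.disjoint_left]
    rintro x ⟨-, hx⟩ ⟨-, hx'⟩
    exact hx' hx
  conv_lhs => rw [hu]
  exact Set.ncard_union_eq hd (hA.subset (Set.sep_subset _ _)) (hA.subset (Set.sep_subset _ _))

lemma sub_single_add {x₀ : σ} {d : σ →₀ ℕ} (hd : d x₀ ≠ 0) :
    d - Finsupp.single x₀ 1 + Finsupp.single x₀ 1 = d := by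
  ext s
  rw [Finsupp.add_apply, Finsupp.tsub_apply]
  rcases eq_or_ne s x₀ with rfl | hs
  · rw [Finsupp.single_eq_same]; omega
  · rw [Finsupp.single_eq_of_ne' (Ne.symm hs)]; omega

lemma ncard_shift (x₀ : σ) (A B : Set (σ →₀ ℕ))
    (hAB : ∀ d, d ∈ A ↔ d + Finsupp.single x₀ 1 ∈ B)
    (hB : ∀ d ∈ B, d x₀ ≠ 0) : B.ncard = A.ncard := by
  have himg : B = (fun d => d + Finsupp.single x₀ 1) '' A := by
    ext d
    constructor
    · intro hd
      exact ⟨d - Finsupp.single x₀ 1, (hAB _).mpr (by rwa [sub_single_add (hB d hd)]),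
        sub_single_add (hB d hd)⟩
    · rintro ⟨a, ha, rfl⟩
      exact (hAB a).mp ha
  rw [himg]
  apply Set.ncard_image_of_injective
  intro a b hab
  ext s
  have := DFunLike.congr_fun hab s
  rw [Finsupp.add_apply, Finsupp.add_apply] at this
  omega

/-! ### The specific sets of monomials -/

variable {n : ℕ}

/-- Monomials counted by `λ(1+λ)/(1-λ)^{|T|+2}`-type series: positive exponent on the new
vertex, support among `T ∪ {i,j}`, not both `i` and `j`. -/
def CSet (i j : Fin n) (T : Finset (Fin n)) (m : ℕ) : Set (Option (Fin n) →₀ ℕ) :=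
  {d | Finsupp.degree d = m ∧ d none ≠ 0 ∧
    (∀ y : Fin n, d (some y) ≠ 0 → y ∈ T ∨ y = i ∨ y = j) ∧
    ¬(d (some i) ≠ 0 ∧ d (some j) ≠ 0)}

def DSet (i j : Fin n) (m : ℕ) : Set (Option (Fin n) →₀ ℕ) :=
  {d | Finsupp.degree d = m ∧ (∀ y : Fin n, d (some y) ≠ 0 → y = i ∨ y = j) ∧
    ¬(d (some i) ≠ 0 ∧ d (some j) ≠ 0)}

def BSet (i j : Fin n) (m : ℕ) : Set (Option (Fin n) →₀ ℕ) :=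
  {d | d ∈ DSet i j m ∧ d none = 0}

lemma CSet_finite (i j : Fin n) (T : Finset (Fin n)) (m : ℕ) : (CSet i j T m).Finite :=
  (Finsupp.finite_of_degree_le m).subset fun _ hd => le_of_eq hd.1

lemma DSet_finite (i j : Fin n) (m : ℕ) : (DSet i j m).Finite :=
  (Finsupp.finite_of_degree_le m).subset fun _ hd => le_of_eq hd.1

variable {i j : Fin n}

lemma CSet_zero (T : Finset (Fin n)) : CSet i j T 0 = ∅ := by
  ext d
  simp only [CSet, Set.mem_setOf_eq, Set.mem_empty_iff_false, iff_false, not_and]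
  intro hdeg h0
  exact absurd (le_trans (Finsupp.le_degree none d) (le_of_eq hdeg)) (by omega)

lemma BSet_zero : BSet i j 0 = {0} := by
  ext d
  simp only [BSet, DSet, Set.mem_setOf_eq, Set.mem_singleton_iff]
  constructor
  · rintro ⟨⟨hdeg, -, -⟩, -⟩
    exact (Finsupp.degree_eq_zero_iff d).mp hdeg
  · rintro rfl
    simp

lemma DSet_zero : DSet i j 0 = {0} := by
  ext d
  simp only [DSet, Set.mem_setOf_eq, Set.mem_singleton_iff]
  constructor
  · rintro ⟨hdeg, -, -⟩
    exact (Finsupp.degree_eq_zero_iff d).mp hdeg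
  · rintro rfl
    simp

lemma BSet_succ (hij : i ≠ j) (m : ℕ) :
    BSet i j (m + 1) = {Finsupp.single (some i) (m + 1), Finsupp.single (some j) (m + 1)} := by
  ext d
  simp only [BSet, DSet, Set.mem_setOf_eq, Set.mem_insert_iff, Set.mem_singleton_iff]
  constructor
  · rintro ⟨⟨hdeg, hsupp, hnb⟩, h0⟩
    have key : ∀ a : Fin n, d (some a) = 0 →
        (∀ y : Fin n, y ≠ a → y = i ∨ y = j → True) → True := fun _ _ _ => trivial
    rcases not_and_or.mp hnb with hi0 | hj0
    · rw [not_not] at hi0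
      right
      have hd : d = Finsupp.single (some j) (d (some j)) := by
        ext x
        rcases x with _ | y
        · rw [h0, Finsupp.single_eq_of_ne' (by simp)]
        · rcases eq_or_ne y j with rfl | hyj
          · rw [Finsupp.single_eq_same]
          · rw [Finsupp.single_eq_of_ne' (by simpa using Ne.symm hyj)]
            by_contra hy
            rcases hsupp y hy with rfl | rfl
            · exact hy hi0
            · exact hyj rfl
      have : d (some j) = m + 1 := by
        rw [hd] at hdeg
        rwa [degree_single] at hdeg
      rw [hd, this]
    · rw [not_not] at hj0
      left
      have hd : d = Finsupp.single (some i) (d (some i)) := by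
        ext x
        rcases x with _ | y
        · rw [h0, Finsupp.single_eq_of_ne' (by simp)]
        · rcases eq_or_ne y i with rfl | hyi
          · rw [Finsupp.single_eq_same]
          · rw [Finsupp.single_eq_of_ne' (by simpa using Ne.symm hyi)]
            by_contra hy
            rcases hsupp y hy with rfl | rfl
            · exact hyi rfl
            · exact hy hj0
      have : d (some i) = m + 1 := by
        rw [hd] at hdeg
        rwa [degree_single] at hdeg
      rw [hd, this]
  · rintro (rfl | rfl)
    · refine ⟨⟨degree_single _ _, ?_, ?_⟩, ?_⟩
      · intro y hy
        left
        by_contra hyi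
        exact hy (Finsupp.single_eq_of_ne' (by simpa using fun h => hyi h.symm))
      · rintro ⟨-, hj'⟩
        exact hj' (Finsupp.single_eq_of_ne' (by simpa using hij))
      · exact Finsupp.single_eq_of_ne' (by simp)
    · refine ⟨⟨degree_single _ _, ?_, ?_⟩, ?_⟩
      · intro y hy
        right
        by_contra hyj
        exact hy (Finsupp.single_eq_of_ne' (by simpa using fun h => hyj h.symm))
      · rintro ⟨hi', -⟩
        exact hi' (Finsupp.single_eq_of_ne' (by simpa using Ne.symm hij))
      · exact Finsupp.single_eq_of_ne' (by simp)

lemma BSet_succ_ncard (hij : i ≠ j) (m : ℕ) : (BSet i j (m + 1)).ncard = 2 := by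
  rw [BSet_succ hij m]
  apply Set.ncard_pair
  intro h
  have := DFunLike.congr_fun h (some i)
  rw [Finsupp.single_eq_same, Finsupp.single_eq_of_ne' (by simpa using Ne.symm hij)] at this
  omega

lemma DSet_succ_ncard (m : ℕ) :
    (DSet i j (m + 1)).ncard = (BSet i j (m + 1)).ncard + (DSet i j m).ncard := by
  have h1 : {x ∈ DSet i j (m + 1) | (fun d => d none = 0) x} = BSet i j (m + 1) := rfl
  have h2 : {x ∈ DSet i j (m + 1) | ¬ (fun d => d none = 0) x}.ncard = (DSet i j m).ncard := by
    apply ncard_shift (none : Option (Fin n)) (DSet i j m)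
    · intro d
      constructor
      · rintro ⟨hdeg, hsupp, hnb⟩
        have happ : ∀ y : Fin n, ((d + Finsupp.single none 1 : Option (Fin n) →₀ ℕ)) (some y) = d (some y) := by
          intro y
          rw [Finsupp.add_apply, Finsupp.single_eq_of_ne (by simp), add_zero]
        refine ⟨⟨?_, ?_, ?_⟩, ?_⟩
        · rw [degree_add, degree_single, hdeg]
        · intro y hy
          rw [happ] at hy
          exact hsupp y hy
        · rw [happ, happ]
          exact hnb
        · simp only [Finsupp.add_apply, Finsupp.single_eq_same]
          omega
      · rintro ⟨⟨hdeg, hsupp, hnb⟩, -⟩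
        have happ : ∀ y : Fin n, ((d + Finsupp.single none 1 : Option (Fin n) →₀ ℕ)) (some y) = d (some y) := by
          intro y
          rw [Finsupp.add_apply, Finsupp.single_eq_of_ne (by simp), add_zero]
        refine ⟨?_, ?_, ?_⟩
        · rw [degree_add, degree_single] at hdeg
          omega
        · intro y hy
          exact hsupp y (by rwa [happ])
        · rw [happ, happ] at hnb
          exact hnb
    · rintro d ⟨-, h0⟩
      exact h0
  rw [ncard_split (DSet i j (m + 1)) (DSet_finite i j (m + 1)) (fun d => d none = 0), h1, h2]

lemma CSet_empty_succ_ncard (m : ℕ) :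
    (CSet i j ∅ (m + 1)).ncard = (DSet i j m).ncard := by
  apply ncard_shift (none : Option (Fin n)) (DSet i j m)
  · intro d
    have happ : ∀ y : Fin n, ((d + Finsupp.single none 1 : Option (Fin n) →₀ ℕ)) (some y) = d (some y) := by
      intro y
      rw [Finsupp.add_apply, Finsupp.single_eq_of_ne (by simp), add_zero]
    constructor
    · rintro ⟨hdeg, hsupp, hnb⟩
      refine ⟨?_, ?_, ?_, ?_⟩
      · rw [degree_add, degree_single, hdeg]
      · rw [Finsupp.add_apply, Finsupp.single_eq_same]
        omega
      · intro y hy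
        rw [happ] at hy
        exact Or.inr (hsupp y hy)
      · rw [happ, happ]
        exact hnb
    · rintro ⟨hdeg, -, hsupp, hnb⟩
      refine ⟨?_, ?_, ?_⟩
      · rw [degree_add, degree_single] at hdeg
        omega
      · intro y hy
        rcases hsupp y (by rwa [happ]) with h | h
        · exact absurd h (Finset.notMem_empty y)
        · exact h
      · rw [happ, happ] at hnb
        exact hnb
  · rintro d ⟨-, h0, -⟩
    exact h0

lemma CSet_succ_ncard {T : Finset (Fin n)} {s : Fin n} (hs : s ∈ T) (hsi : s ≠ i) (hsj : s ≠ j)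
    (m : ℕ) : (CSet i j T (m + 1)).ncard
      = (CSet i j (T.erase s) (m + 1)).ncard + (CSet i j T m).ncard := by
  have h1 : {x ∈ CSet i j T (m + 1) | (fun d => d (some s) = 0) x}
      = CSet i j (T.erase s) (m + 1) := by
    ext d
    simp only [Set.mem_setOf_eq, CSet]
    constructor
    · rintro ⟨⟨hdeg, h0, hsupp, hnb⟩, hds⟩
      refine ⟨hdeg, h0, ?_, hnb⟩
      intro y hy
      rcases hsupp y hy with hyT | h
      · left
        refine Finset.mem_erase.mpr ⟨?_, hyT⟩
        rintro rfl
        exact hy hds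
      · exact Or.inr h
    · rintro ⟨hdeg, h0, hsupp, hnb⟩
      refine ⟨⟨hdeg, h0, ?_, hnb⟩, ?_⟩
      · intro y hy
        rcases hsupp y hy with hyT | h
        · exact Or.inl (Finset.mem_of_mem_erase hyT)
        · exact Or.inr h
      · by_contra hds
        rcases hsupp s hds with hsT | h
        · exact (Finset.notMem_erase s T) hsT
        · rcases h with rfl | rfl
          · exact hsi rfl
          · exact hsj rfl
  have h2 : {x ∈ CSet i j T (m + 1) | ¬ (fun d => d (some s) = 0) x}.ncard
      = (CSet i j T m).ncard := by
    apply ncard_shift (some s) (CSet i j T m)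
    · intro d
      have happ : ∀ x : Option (Fin n), x ≠ some s →
          ((d + Finsupp.single (some s) 1 : Option (Fin n) →₀ ℕ)) x = d x := by
        intro x hx
        rw [Finsupp.add_apply, Finsupp.single_eq_of_ne' (Ne.symm hx), add_zero]
      constructor
      · rintro ⟨hdeg, h0, hsupp, hnb⟩
        refine ⟨⟨?_, ?_, ?_, ?_⟩, ?_⟩
        · rw [degree_add, degree_single, hdeg]
        · rwa [happ none (by simp)]
        · intro y hy
          rcases eq_or_ne y s with rfl | hys
          · exact Or.inl hs
          · rw [happ (some y) (by simpa using hys)] at hy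
            exact hsupp y hy
        · rw [happ (some i) (by simpa using Ne.symm hsi),
            happ (some j) (by simpa using Ne.symm hsj)]
          exact hnb
        · simp only [Finsupp.add_apply, Finsupp.single_eq_same]
          omega
      · rintro ⟨⟨hdeg, h0, hsupp, hnb⟩, -⟩
        refine ⟨?_, ?_, ?_, ?_⟩
        · rw [degree_add, degree_single] at hdeg
          omega
        · rwa [happ none (by simp)] at h0
        · intro y hy
          rcases eq_or_ne y s with rfl | hys
          · exact Or.inl hs
          · exact hsupp y (by rwa [happ (some y) (by simpa using hys)])
        · rwa [happ (some i) (by simpa using Ne.symm hsi),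
            happ (some j) (by simpa using Ne.symm hsj)] at hnb
    · rintro d ⟨-, hds⟩
      exact hds
  rw [ncard_split (CSet i j T (m + 1)) (CSet_finite i j T (m + 1)) (fun d => d (some s) = 0),
    h1, h2]

/-! ### Adjacency in the suspension -/

variable {G : SimpleGraph (Fin n)} {S : Finset (Fin n)}

lemma eSusp_adj_some_some {x y : Fin n} :
    (eSusp G i j (↑S : Set (Fin n))).Adj (some x) (some y) ↔ G.Adj x y := by
  simp only [eSusp, SimpleGraph.fromRel_adj]
  constructor
  · rintro ⟨hne, (⟨u, v, hu, hv, huv⟩ | ⟨h, -⟩) | (⟨u, v, hu, hv, huv⟩ | ⟨h, -⟩)⟩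
    · cases hu; cases hv; exact huv
    · exact absurd h (by simp)
    · cases hu; cases hv; exact huv.symm
    · exact absurd h (by simp)
  · intro h
    exact ⟨by simpa using h.ne, Or.inl (Or.inl ⟨x, y, rfl, rfl, h⟩)⟩

lemma eSusp_adj_none_some {y : Fin n} :
    (eSusp G i j (↑S : Set (Fin n))).Adj none (some y) ↔ (y ∉ S ∧ y ≠ i ∧ y ≠ j) := by
  simp only [eSusp, SimpleGraph.fromRel_adj]
  constructor
  · rintro ⟨hne, (⟨u, v, hu, hv, huv⟩ | ⟨-, z, hz, hz1, hz2, hz3⟩) |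
      (⟨u, v, hu, hv, huv⟩ | ⟨h, -⟩)⟩
    · exact absurd hu (by simp)
    · cases hz; exact ⟨by simpa using hz1, hz2, hz3⟩
    · exact absurd hv (by simp)
    · exact absurd h (by simp)
  · rintro ⟨h1, h2, h3⟩
    exact ⟨by simp, Or.inl (Or.inr ⟨trivial, y, rfl, by simpa using h1, h2, h3⟩)⟩

/-- The key splitting of standard monomials of the suspension. -/
lemma Std_split (hij : G.Adj i j) (hS : ∀ x ∈ S, ∀ y ∈ S, ¬ G.Adj x y)
    (hSij : ∀ x ∈ S, ¬ G.Adj x i ∧ ¬ G.Adj x j) (m : ℕ) :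
    (Std (eSusp G i j (↑S : Set (Fin n))) m).ncard
      = (Std G m).ncard + (CSet i j S m).ncard := by
  set G' := eSusp G i j (↑S : Set (Fin n)) with hG'
  have emb : Fin n ↪ Option (Fin n) := ⟨some, Option.some_injective _⟩
  have h1 : {x ∈ Std G' m | (fun d => d none = 0) x}
      = (fun e => Finsupp.embDomain ⟨some, Option.some_injective _⟩ e) '' Std G m := by
    ext d
    constructor
    · rintro ⟨⟨hdeg, hind⟩, h0⟩
      have hext : Finsupp.embDomain ⟨some, Option.some_injective _⟩
          (Finsupp.some d) = d := by
        ext x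
        rcases x with _ | a
        · rw [Finsupp.embDomain_notin_range _ _ _ (by simp), h0]
        · exact Finsupp.embDomain_apply_self _ (Finsupp.some d) a
      refine ⟨Finsupp.some d, ⟨?_, ?_⟩, hext⟩
      · rw [← degree_embDomain ⟨some, Option.some_injective _⟩ (Finsupp.some d), hext]
        exact hdeg
      · intro a b hab hcon
        refine hind (some a) (some b) (eSusp_adj_some_some.mpr hab) ?_
        rw [Finsupp.some_apply, Finsupp.some_apply] at hcon
        exact hcon
    · rintro ⟨e, ⟨hdeg, hind⟩, rfl⟩
      refine ⟨⟨?_, ?_⟩, ?_⟩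
      · rw [degree_embDomain]
        exact hdeg
      · intro a b hab hcon
        have hnone : (Finsupp.embDomain (⟨some, Option.some_injective _⟩ :
            Fin n ↪ Option (Fin n)) e) none = 0 :=
          Finsupp.embDomain_notin_range _ _ _ (by simp)
        rcases a with _ | a
        · exact hcon.1 hnone
        · rcases b with _ | b
          · exact hcon.2 hnone
          · have ha := Finsupp.embDomain_apply_self (⟨some, Option.some_injective _⟩ :
              Fin n ↪ Option (Fin n)) e a
            have hb := Finsupp.embDomain_apply_self (⟨some, Option.some_injective _⟩ :
              Fin n ↪ Option (Fin n)) e b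
            refine hind a b (eSusp_adj_some_some.mp hab) ⟨?_, ?_⟩
            · rw [← ha]
              exact hcon.1
            · rw [← hb]
              exact hcon.2
      · exact Finsupp.embDomain_notin_range _ _ _ (by simp)
  have h2 : {x ∈ Std G' m | ¬ (fun d => d none = 0) x} = CSet i j S m := by
    ext d
    constructor
    · rintro ⟨⟨hdeg, hind⟩, h0⟩
      refine ⟨hdeg, h0, ?_, ?_⟩
      · intro y hy
        by_contra hcon
        push_neg at hcon
        obtain ⟨hy1, hy2, hy3⟩ := hcon
        exact hind none (some y) (eSusp_adj_none_some.mpr ⟨hy1, hy2, hy3⟩) ⟨h0, hy⟩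
      · exact fun hcon => hind (some i) (some j) (eSusp_adj_some_some.mpr hij) hcon
    · rintro ⟨hdeg, h0, hsupp, hnb⟩
      refine ⟨⟨hdeg, ?_⟩, h0⟩
      intro a b hab hcon
      rcases a with _ | a
      · rcases b with _ | b
        · exact G'.loopless.irrefl none hab
        · obtain ⟨hb1, hb2, hb3⟩ := eSusp_adj_none_some.mp hab
          rcases hsupp b hcon.2 with h | h | h
          · exact hb1 h
          · exact hb2 h
          · exact hb3 h
      · rcases b with _ | b
        · obtain ⟨ha1, ha2, ha3⟩ := eSusp_adj_none_some.mp hab.symm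
          rcases hsupp a hcon.1 with h | h | h
          · exact ha1 h
          · exact ha2 h
          · exact ha3 h
        · have hGab : G.Adj a b := eSusp_adj_some_some.mp hab
          rcases hsupp a hcon.1 with ha | ha | ha
          · rcases hsupp b hcon.2 with hb | hb | hb
            · exact hS a ha b hb hGab
            · exact (hSij a ha).1 (hb ▸ hGab)
            · exact (hSij a ha).2 (hb ▸ hGab)
          · rcases hsupp b hcon.2 with hb | hb | hb
            · exact (hSij b hb).1 (ha ▸ hGab.symm)
            · rw [ha, hb] at hGab
              exact G.loopless.irrefl i hGab
            · exact hnb ⟨ha ▸ hcon.1, hb ▸ hcon.2⟩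
          · rcases hsupp b hcon.2 with hb | hb | hb
            · exact (hSij b hb).2 (ha ▸ hGab.symm)
            · exact hnb ⟨hb ▸ hcon.2, ha ▸ hcon.1⟩
            · rw [ha, hb] at hGab
              exact G.loopless.irrefl j hGab
  rw [ncard_split (Std G' m) (Std_finite G' m) (fun d => d none = 0), h1, h2,
    Set.ncard_image_of_injective _ (Finsupp.embDomain_injective _)]

/-! ### Power series computations -/

open PowerSeries

lemma oneSub_mul_coeff (f : PowerSeries ℚ) (m : ℕ) :
    (PowerSeries.coeff (m + 1)) ((1 - PowerSeries.X) * f)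
      = PowerSeries.coeff (m + 1) f - PowerSeries.coeff m f := by
  rw [sub_mul, one_mul, map_sub, PowerSeries.coeff_succ_X_mul]

lemma oneSub_mul_coeff_zero (f : PowerSeries ℚ) :
    PowerSeries.coeff 0 ((1 - PowerSeries.X) * f) = PowerSeries.coeff 0 f := by
  rw [sub_mul, one_mul, map_sub, PowerSeries.coeff_zero_X_mul, sub_zero]

lemma series_B (hij : i ≠ j) :
    (1 - PowerSeries.X) * PowerSeries.mk (fun m => ((BSet i j m).ncard : ℚ))
      = 1 + PowerSeries.X := by
  ext m
  rcases m with _ | m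
  · rw [oneSub_mul_coeff_zero, PowerSeries.coeff_mk, BSet_zero]
    simp
  · rw [oneSub_mul_coeff, PowerSeries.coeff_mk, PowerSeries.coeff_mk]
    rcases m with _ | m
    · rw [BSet_succ_ncard hij, BSet_zero]
      simp
      norm_num
    · rw [BSet_succ_ncard hij, BSet_succ_ncard hij]
      simp [PowerSeries.coeff_one, PowerSeries.coeff_X]

lemma series_D (hij : i ≠ j) :
    (1 - PowerSeries.X) * PowerSeries.mk (fun m => ((DSet i j m).ncard : ℚ))
      = PowerSeries.mk (fun m => ((BSet i j m).ncard : ℚ)) := by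
  ext m
  rcases m with _ | m
  · rw [oneSub_mul_coeff_zero, PowerSeries.coeff_mk, PowerSeries.coeff_mk, DSet_zero, BSet_zero]
  · rw [oneSub_mul_coeff, PowerSeries.coeff_mk, PowerSeries.coeff_mk, PowerSeries.coeff_mk,
      DSet_succ_ncard]
    push_cast
    ring

lemma series_C_empty :
    PowerSeries.mk (fun m => ((CSet i j ∅ m).ncard : ℚ))
      = PowerSeries.X * PowerSeries.mk (fun m => ((DSet i j m).ncard : ℚ)) := by
  ext m
  rcases m with _ | m
  · rw [PowerSeries.coeff_mk, PowerSeries.coeff_zero_X_mul, CSet_zero]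
    simp
  · rw [PowerSeries.coeff_mk, PowerSeries.coeff_succ_X_mul, PowerSeries.coeff_mk,
      CSet_empty_succ_ncard]

lemma series_C_erase {T : Finset (Fin n)} {s : Fin n} (hs : s ∈ T) (hsi : s ≠ i) (hsj : s ≠ j) :
    (1 - PowerSeries.X) * PowerSeries.mk (fun m => ((CSet i j T m).ncard : ℚ))
      = PowerSeries.mk (fun m => ((CSet i j (T.erase s) m).ncard : ℚ)) := by
  ext m
  rcases m with _ | m
  · rw [oneSub_mul_coeff_zero, PowerSeries.coeff_mk, PowerSeries.coeff_mk, CSet_zero, CSet_zero]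
  · rw [oneSub_mul_coeff, PowerSeries.coeff_mk, PowerSeries.coeff_mk, PowerSeries.coeff_mk,
      CSet_succ_ncard hs hsi hsj]
    push_cast
    ring

lemma series_C (T : Finset (Fin n)) (hi : i ∉ T) (hj : j ∉ T) :
    PowerSeries.mk (fun m => ((CSet i j T m).ncard : ℚ)) * (1 - PowerSeries.X) ^ T.card
      = PowerSeries.mk (fun m => ((CSet i j ∅ m).ncard : ℚ)) := by
  classical
  induction T using Finset.induction_on with
  | empty => simp
  | @insert s T hsT ih =>
    have hsi : s ≠ i := by
      rintro rfl
      exact hi (Finset.mem_insert_self s T)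
    have hsj : s ≠ j := by
      rintro rfl
      exact hj (Finset.mem_insert_self s T)
    have hiT : i ∉ T := fun h => hi (Finset.mem_insert_of_mem h)
    have hjT : j ∉ T := fun h => hj (Finset.mem_insert_of_mem h)
    rw [Finset.card_insert_of_notMem hsT, pow_succ]
    calc PowerSeries.mk (fun m => ((CSet i j (insert s T) m).ncard : ℚ))
          * ((1 - PowerSeries.X) ^ T.card * (1 - PowerSeries.X))
        = ((1 - PowerSeries.X) * PowerSeries.mk
            (fun m => ((CSet i j (insert s T) m).ncard : ℚ)))
            * (1 - PowerSeries.X) ^ T.card := by ring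
      _ = PowerSeries.mk (fun m => ((CSet i j ((insert s T).erase s) m).ncard : ℚ))
            * (1 - PowerSeries.X) ^ T.card := by
          rw [series_C_erase (Finset.mem_insert_self s T) hsi hsj]
      _ = PowerSeries.mk (fun m => ((CSet i j T m).ncard : ℚ))
            * (1 - PowerSeries.X) ^ T.card := by
          rw [Finset.erase_insert hsT]
      _ = PowerSeries.mk (fun m => ((CSet i j ∅ m).ncard : ℚ)) := ih hiT hjT

lemma series_C_total (hij : i ≠ j) (S : Finset (Fin n)) (hi : i ∉ S) (hj : j ∉ S) :
    PowerSeries.mk (fun m => ((CSet i j S m).ncard : ℚ)) * (1 - PowerSeries.X) ^ (S.card + 2)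
      = PowerSeries.X * (1 + PowerSeries.X) := by
  calc PowerSeries.mk (fun m => ((CSet i j S m).ncard : ℚ))
        * (1 - PowerSeries.X) ^ (S.card + 2)
      = (PowerSeries.mk (fun m => ((CSet i j S m).ncard : ℚ))
          * (1 - PowerSeries.X) ^ S.card) * (1 - PowerSeries.X) ^ 2 := by ring
    _ = PowerSeries.mk (fun m => ((CSet i j ∅ m).ncard : ℚ)) * (1 - PowerSeries.X) ^ 2 := by
        rw [series_C S hi hj]
    _ = PowerSeries.X * (((1 - PowerSeries.X) * ((1 - PowerSeries.X)
          * PowerSeries.mk (fun m => ((DSet i j m).ncard : ℚ))))) := by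
        rw [series_C_empty]
        ring
    _ = PowerSeries.X * ((1 - PowerSeries.X)
          * PowerSeries.mk (fun m => ((BSet i j m).ncard : ℚ))) := by
        rw [series_D hij]
    _ = PowerSeries.X * (1 + PowerSeries.X) := by
        rw [series_B hij]

end Stmt9Aux

/-- Hilbert series of the `{x_i,x_j}, S`-suspension:
`H_{R'/I(G^{{x_i,x_j},S})}(λ) = H_{R/I(G)}(λ) + λ(1+λ)/(1-λ)^{|S|+2}`. -/
theorem stmt_9 (K : Type*) [Field K] {n : ℕ} (G : SimpleGraph (Fin n))
    (hiso : ∀ v : Fin n, ∃ w, G.Adj v w) (i j : Fin n) (hij : G.Adj i j)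
    (S : Finset (Fin n)) (hS : ∀ x ∈ S, ∀ y ∈ S, ¬ G.Adj x y)
    (hSij : ∀ x ∈ S, ¬ G.Adj x i ∧ ¬ G.Adj x j) :
    hilbSeries K (edgeIdeal K (eSusp G i j (↑S : Set (Fin n)))) =
      hilbSeries K (edgeIdeal K G) +
        PowerSeries.X * (1 + PowerSeries.X) *
          ((1 - PowerSeries.X) ^ (S.card + 2))⁻¹ := by
  classical
  have hij' : i ≠ j := hij.ne
  have hiS : i ∉ S := fun h => (hSij i h).2 hij
  have hjS : j ∉ S := fun h => (hSij j h).1 hij.symm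
  have h1 : hilbSeries K (edgeIdeal K (eSusp G i j (↑S : Set (Fin n))))
      = hilbSeries K (edgeIdeal K G)
        + PowerSeries.mk fun m => ((Stmt9Aux.CSet i j S m).ncard : ℚ) := by
    rw [Stmt9Aux.hilbSeries_eq, Stmt9Aux.hilbSeries_eq]
    ext m
    rw [map_add, PowerSeries.coeff_mk, PowerSeries.coeff_mk, PowerSeries.coeff_mk,
      Stmt9Aux.Std_split hij hS hSij m]
    push_cast
    ring
  rw [h1]
  congr 1
  have hunit : ((1 - PowerSeries.X : PowerSeries ℚ) ^ (S.card + 2))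
      * (((1 - PowerSeries.X : PowerSeries ℚ) ^ (S.card + 2))⁻¹) = 1 := by
    apply PowerSeries.mul_inv_cancel
    simp
  calc PowerSeries.mk (fun m => ((Stmt9Aux.CSet i j S m).ncard : ℚ))
      = PowerSeries.mk (fun m => ((Stmt9Aux.CSet i j S m).ncard : ℚ))
        * (((1 - PowerSeries.X) ^ (S.card + 2))
          * ((1 - PowerSeries.X) ^ (S.card + 2))⁻¹) := by
        rw [hunit, mul_one]
    _ = (PowerSeries.mk (fun m => ((Stmt9Aux.CSet i j S m).ncard : ℚ))
        * ((1 - PowerSeries.X) ^ (S.card + 2)))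
          * ((1 - PowerSeries.X) ^ (S.card + 2))⁻¹ := by ring
    _ = PowerSeries.X * (1 + PowerSeries.X)
          * ((1 - PowerSeries.X) ^ (S.card + 2))⁻¹ := by
        rw [Stmt9Aux.series_C_total hij' S hiS hjS]
end
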